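/- For all real numbers a, b > 0 one has a/b + b/a − 2 ≥ (log a − log b)². Equivalently, (a − b)(b⁻¹ − a⁻¹) ≥ (log a − log b)². -/

import Mathlib

/-! Writing `x = a / b = exp L`, the inequality becomes `L² ≤ exp L + exp (-L) - 2`.
The right-hand side is `(2 sinh (L / 2))²`, so it reduces to `|t| ≤ |sinh t|`,
i.e. to `sinh t ≥ t` for `t ≥ 0`, as `sinh` is odd. -/

namespace Real

theorem abs_le_abs_sinh (x : ℝ) : |x| ≤ |sinh x| := by
  rcases le_total 0 x with hx | hx
  · rw [abs_of_nonneg hx, abs_of_nonneg (sinh_nonneg_iff.2 hx)]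
    exact self_le_sinh_iff.2 hx
  · rw [abs_of_nonpos hx, abs_of_nonpos (sinh_nonpos_iff.2 hx), neg_le_neg_iff]
    exact sinh_le_self_iff.2 hx

theorem exp_add_exp_neg_sub_two (x : ℝ) :
    exp x + exp (-x) - 2 = (2 * sinh (x / 2)) ^ 2 := by
  have hx : exp x = exp (x / 2) ^ 2 := by rw [← exp_nat_mul]; ring_nf
  have hnx : exp (-x) = exp (-(x / 2)) ^ 2 := by rw [← exp_nat_mul]; ring_nf
  have hprod : exp (x / 2) * exp (-(x / 2)) = 1 := by rw [← exp_add]; simp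
  rw [sinh_eq, hx, hnx]
  linear_combination 2 * hprod

theorem sq_le_exp_add_exp_neg_sub_two (x : ℝ) : x ^ 2 ≤ exp x + exp (-x) - 2 := by
  rw [exp_add_exp_neg_sub_two]
  refine sq_le_sq.2 ?_
  calc |x| = 2 * |x / 2| := by rw [abs_div, abs_two]; ring
    _ ≤ 2 * |sinh (x / 2)| := by gcongr 2 * ?_; exact abs_le_abs_sinh _
    _ = |2 * sinh (x / 2)| := by rw [abs_mul, abs_two]

theorem log_sq_le_add_inv_sub_two {x : ℝ} (hx : 0 < x) : log x ^ 2 ≤ x + x⁻¹ - 2 := by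
  simpa only [exp_log hx, exp_neg] using sq_le_exp_add_exp_neg_sub_two (log x)

end Real

/-- For positive reals `a, b`: `a/b + b/a - 2 ≥ (log a - log b)²`, and this
quantity equals `(a - b)(b⁻¹ - a⁻¹)`. -/
theorem log_sq_le (a b : ℝ) (ha : 0 < a) (hb : 0 < b) :
    (Real.log a - Real.log b) ^ 2 ≤ a / b + b / a - 2 ∧
      (a - b) * (b⁻¹ - a⁻¹) = a / b + b / a - 2 := by
  constructor
  · simpa only [Real.log_div ha.ne' hb.ne', inv_div] using
      Real.log_sq_le_add_inv_sub_two (div_pos ha hb)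
  · field_simp
    ring
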